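/- Let n ≥ 1, 0 < β ≤ 1, 0 < α₁, α₂ > 0, and δ ≥ 0. Let M and M₊ be n×n real symmetric matrices with vᵀ M v ≥ α₁‖v‖² and 0 ≤ vᵀ M₊ v ≤ α₂‖v‖² for all v ∈ ℝⁿ. Let F and F̃ be n×n real matrices with Fᵀ M₊ F ⪯ (1−β) M and ‖F̃ − F‖ ≤ δ in the operator norm induced by the Euclidean norm. Then F̃ᵀ M₊ F̃ ⪯ (1−β_ℓ) M, where β_ℓ = β − (α₂/α₁)·δ·(2‖F‖ + δ). -/

import Mathlib

/-!
The Loewner condition `Fᵀ Mp F ⪯ c M` says `(F v)ᵀ Mp (F v) ≤ c vᵀ M v` for every `v`. Writing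
`Mp = S S` with `S = √Mp`, the left side is `‖S F v‖²`, and `‖S x‖ ≤ √α₂ ‖x‖`. With `E = F' - F`,
the triangle inequality `‖S F' v‖ ≤ ‖S F v‖ + ‖S E v‖` bounds the increase of the quadratic form by
`α₂ δ (2‖F‖ + δ) ‖v‖²`, which is at most `(α₂/α₁) δ (2‖F‖ + δ) vᵀ M v`.
-/

open Matrix

/-- The Euclidean norm of a vector in `ℝⁿ`. -/
noncomputable def euclNorm {n : ℕ} (v : Fin n → ℝ) : ℝ :=
  Real.sqrt (v ⬝ᵥ v)

/-- The operator norm of a square real matrix induced by the Euclidean norm. -/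
noncomputable def euclOpNorm {n : ℕ} (A : Matrix (Fin n) (Fin n) ℝ) : ℝ :=
  ‖Matrix.toEuclideanCLM (𝕜 := ℝ) A‖

lemma euclNorm_eq_norm_toLp {n : ℕ} (v : Fin n → ℝ) : euclNorm v = ‖WithLp.toLp 2 v‖ := by
  simp [euclNorm, EuclideanSpace.norm_eq, dotProduct, sq]

lemma euclNorm_nonneg {n : ℕ} (v : Fin n → ℝ) : 0 ≤ euclNorm v := Real.sqrt_nonneg _

lemma euclNorm_sq {n : ℕ} (v : Fin n → ℝ) : euclNorm v ^ 2 = v ⬝ᵥ v :=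
  Real.sq_sqrt (by simpa using dotProduct_self_star_nonneg v)

lemma euclNorm_add_le {n : ℕ} (v w : Fin n → ℝ) : euclNorm (v + w) ≤ euclNorm v + euclNorm w := by
  simpa only [euclNorm_eq_norm_toLp, WithLp.toLp_add] using norm_add_le _ _

lemma euclNorm_mulVec_le {n : ℕ} (A : Matrix (Fin n) (Fin n) ℝ) (v : Fin n → ℝ) :
    euclNorm (A *ᵥ v) ≤ euclOpNorm A * euclNorm v := by
  simpa only [euclNorm_eq_norm_toLp, euclOpNorm, toEuclideanCLM_toLp] using
    (toEuclideanCLM (𝕜 := ℝ) A).le_opNorm (WithLp.toLp 2 v)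

open scoped MatrixOrder in
lemma Matrix.PosSemidef.exists_dotProduct_mulVec_eq_euclNorm_sq {n : ℕ}
    {P : Matrix (Fin n) (Fin n) ℝ} (hP : P.PosSemidef) :
    ∃ S : Matrix (Fin n) (Fin n) ℝ, ∀ x, x ⬝ᵥ P *ᵥ x = euclNorm (S *ᵥ x) ^ 2 := by
  refine ⟨CFC.sqrt P, fun x => ?_⟩
  have hS : (CFC.sqrt P)ᵀ = CFC.sqrt P := (CFC.sqrt_nonneg P).posSemidef.isHermitian
  conv_lhs => rw [← CFC.sqrt_mul_sqrt_self P hP.nonneg]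
  rw [euclNorm_sq, ← mulVec_mulVec, dotProduct_mulVec x, ← mulVec_transpose, hS]

lemma posSemidef_smul_sub_transpose_mul_mul_iff {ι : Type*} [Fintype ι]
    {M P : Matrix ι ι ℝ} (hM : M.IsHermitian) (hP : P.IsHermitian) (c : ℝ) (F : Matrix ι ι ℝ) :
    (c • M - Fᵀ * P * F).PosSemidef ↔ ∀ v, (F *ᵥ v) ⬝ᵥ P *ᵥ (F *ᵥ v) ≤ c * (v ⬝ᵥ M *ᵥ v) := by
  have hHerm : (c • M - Fᵀ * P * F).IsHermitian :=
    (hM.smul (IsSelfAdjoint.all c)).sub (by simpa using isHermitian_conjTranspose_mul_mul F hP)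
  simp only [posSemidef_iff_dotProduct_mulVec, hHerm, true_and, star_trivial, sub_mulVec,
    dotProduct_sub, smul_mulVec, dotProduct_smul, smul_eq_mul, sub_nonneg, ← mulVec_mulVec,
    dotProduct_mulVec _ Fᵀ, vecMul_transpose]

lemma Matrix.PosSemidef.dotProduct_mulVec_le_add {n : ℕ} {P F F' : Matrix (Fin n) (Fin n) ℝ}
    {α δ : ℝ} (hP : P.PosSemidef) (hα : 0 ≤ α) (hPle : ∀ x, x ⬝ᵥ P *ᵥ x ≤ α * euclNorm x ^ 2)
    (hFF' : euclOpNorm (F' - F) ≤ δ) (v : Fin n → ℝ) :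
    (F' *ᵥ v) ⬝ᵥ P *ᵥ (F' *ᵥ v)
      ≤ (F *ᵥ v) ⬝ᵥ P *ᵥ (F *ᵥ v) + α * δ * (2 * euclOpNorm F + δ) * euclNorm v ^ 2 := by
  obtain ⟨S, hS⟩ := hP.exists_dotProduct_mulVec_eq_euclNorm_sq
  have hSle : ∀ x, euclNorm (S *ᵥ x) ≤ √α * euclNorm x := fun x => by
    rw [← Real.sqrt_sq (euclNorm_nonneg x), ← Real.sqrt_mul hα]
    exact Real.le_sqrt_of_sq_le (hS x ▸ hPle x)
  set a := S *ᵥ F *ᵥ v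
  set b := S *ᵥ (F' - F) *ᵥ v
  have hab : S *ᵥ F' *ᵥ v = a + b := by simp only [a, b, sub_mulVec, mulVec_sub]; abel
  have ha : euclNorm a ≤ √α * (euclOpNorm F * euclNorm v) :=
    (hSle _).trans (by gcongr; exact euclNorm_mulVec_le F v)
  have hb : euclNorm b ≤ √α * (δ * euclNorm v) :=
    (hSle _).trans (by
      gcongr
      exact (euclNorm_mulVec_le _ v).trans (mul_le_mul_of_nonneg_right hFF' (euclNorm_nonneg v)))
  rw [hS, hS, hab]
  calc euclNorm (a + b) ^ 2 ≤ (euclNorm a + euclNorm b) ^ 2 := by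
        gcongr
        · exact euclNorm_nonneg _
        · exact euclNorm_add_le a b
    _ = euclNorm a ^ 2 + (2 * euclNorm a + euclNorm b) * euclNorm b := by ring
    _ ≤ euclNorm a ^ 2 + (2 * (√α * (euclOpNorm F * euclNorm v)) + √α * (δ * euclNorm v))
          * (√α * (δ * euclNorm v)) := by
        have := euclNorm_nonneg a
        have := euclNorm_nonneg b
        gcongr euclNorm a ^ 2 + ?_ * ?_ <;> linarith
    _ = _ := by
        linear_combination (2 * euclOpNorm F + δ) * δ * euclNorm v ^ 2 * Real.sq_sqrt hα

theorem contraction_condition_jacobian_robustness_general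
    (n : ℕ) (β α₁ α₂ δ : ℝ)
    (hα₁ : 0 < α₁) (hα₂ : 0 < α₂) (hδ : 0 ≤ δ)
    (M Mp : Matrix (Fin n) (Fin n) ℝ) (hM : M.IsHermitian) (hMp : Mp.IsHermitian)
    (hMlb : ∀ v : Fin n → ℝ, α₁ * (euclNorm v) ^ 2 ≤ v ⬝ᵥ M.mulVec v)
    (hMp0 : ∀ v : Fin n → ℝ, 0 ≤ v ⬝ᵥ Mp.mulVec v)
    (hMpub : ∀ v : Fin n → ℝ, v ⬝ᵥ Mp.mulVec v ≤ α₂ * (euclNorm v) ^ 2)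
    (F F' : Matrix (Fin n) (Fin n) ℝ)
    (hF : ((1 - β) • M - Fᵀ * Mp * F).PosSemidef)
    (hFF' : euclOpNorm (F' - F) ≤ δ) :
    ((1 - (β - α₂ / α₁ * δ * (2 * euclOpNorm F + δ))) • M - F'ᵀ * Mp * F').PosSemidef := by
  have hMpPSD : Mp.PosSemidef := .of_dotProduct_mulVec_nonneg hMp (by simpa using hMp0)
  rw [posSemidef_smul_sub_transpose_mul_mul_iff hM hMp] at hF ⊢
  intro v
  set c := α₂ / α₁ * δ * (2 * euclOpNorm F + δ)
  have hc : 0 ≤ c := by have : 0 ≤ euclOpNorm F := norm_nonneg _; positivity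
  have hcM : α₂ * δ * (2 * euclOpNorm F + δ) * euclNorm v ^ 2 ≤ c * (v ⬝ᵥ M *ᵥ v) :=
    calc _ = c * (α₁ * euclNorm v ^ 2) := by simp only [c]; field_simp
      _ ≤ _ := by gcongr; exact hMlb v
  linarith [hMpPSD.dotProduct_mulVec_le_add hα₂.le hMpub hFF' v, hF v]

/-- robustness of the contraction condition to Jacobian perturbations.
With `α₁‖v‖² ≤ vᵀ M v`, `0 ≤ vᵀ Mp v ≤ α₂‖v‖²`, `Fᵀ Mp F ⪯ (1-β) M` (`P ⪯ Q` meaning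
`Q - P` positive semidefinite), and `‖F' - F‖ ≤ δ` in the Euclidean-induced operator
norm, the perturbed Jacobian satisfies `F'ᵀ Mp F' ⪯ (1-β_ℓ) M` with
`β_ℓ = β - (α₂/α₁) δ (2‖F‖ + δ)`. -/
theorem contraction_condition_jacobian_robustness
    (n : ℕ) (hn : 1 ≤ n) (β α₁ α₂ δ : ℝ)
    (hβ0 : 0 < β) (hβ1 : β ≤ 1) (hα₁ : 0 < α₁) (hα₂ : 0 < α₂) (hδ : 0 ≤ δ)
    (M Mp : Matrix (Fin n) (Fin n) ℝ) (hM : M.IsHermitian) (hMp : Mp.IsHermitian)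
    (hMlb : ∀ v : Fin n → ℝ, α₁ * (euclNorm v) ^ 2 ≤ v ⬝ᵥ M.mulVec v)
    (hMp0 : ∀ v : Fin n → ℝ, 0 ≤ v ⬝ᵥ Mp.mulVec v)
    (hMpub : ∀ v : Fin n → ℝ, v ⬝ᵥ Mp.mulVec v ≤ α₂ * (euclNorm v) ^ 2)
    (F F' : Matrix (Fin n) (Fin n) ℝ)
    (hF : ((1 - β) • M - Fᵀ * Mp * F).PosSemidef)
    (hFF' : euclOpNorm (F' - F) ≤ δ) :
    ((1 - (β - α₂ / α₁ * δ * (2 * euclOpNorm F + δ))) • M - F'ᵀ * Mp * F').PosSemidef :=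
  contraction_condition_jacobian_robustness_general n β α₁ α₂ δ hα₁ hα₂ hδ M Mp hM hMp hMlb hMp0
    hMpub F F' hF hFF'
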